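/- Let L ≥ 1 be a natural number, Q an L×L generator matrix, and F a cumulative distribution function on [0,∞) with F(0)=0 admitting a continuous density f ≥ 0, F^c := 1−F with F^c(x) > 0 for all x ≥ 0, and hazard rate μ(a) := f(a)/F^c(a). Let i : [0,∞)×[0,∞) → ℝ^L be continuous (row-vector valued), and suppose that for every (t,𝔞) with t > 0 and 𝔞 > 0, the directional derivative of i at (t,𝔞) in the direction (1,1) exists and equals −μ(𝔞)·i(t,𝔞) + i(t,𝔞)·Q. Then: (a) for all 0 ≤ t ≤ 𝔞, i(t,𝔞) = (F^c(𝔞)/F^c(𝔞−t))·i(0,𝔞−t)·exp(tQ); and (b) for all 0 ≤ 𝔞 < t, i(t,𝔞) = F^c(𝔞)·i(t−𝔞,0)·exp(𝔞Q). -/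

import Mathlib

/-!
Along a characteristic `s ↦ (t₀ + s, a₀ + s)` the PDE becomes the linear ODE
`u' = (c'/c) u + u Q` with `c(s) = F^c(a₀ + s)`, for which `c(s)⁻¹ u(s) e^{(b - s) Q}` has zero
derivative. The PDE only holds in the open quadrant, so constancy up to the boundary comes from
the mean value theorem together with the continuity of `i` on the closed quadrant. Part (a)
follows the characteristic starting at `(0, 𝔞 - t)`, part (b) the one starting at `(t - 𝔞, 0)`.
-/

open Matrix intervalIntegral Set

/-- `Q` is the generator matrix of a continuous-time Markov chain on `Fin L`:
nonnegative off-diagonal entries and zero row sums. -/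
def IsGeneratorMatrix {L : ℕ} (Q : Matrix (Fin L) (Fin L) ℝ) : Prop :=
  (∀ i j, i ≠ j → 0 ≤ Q i j) ∧ ∀ i, ∑ j, Q i j = 0

/-- The complementary c.d.f. `F^c = 1 - F` associated with the density `f` on `[0,∞)`,
where `F(x) = ∫₀ˣ f(u) du`. -/
noncomputable def survival (f : ℝ → ℝ) (x : ℝ) : ℝ := 1 - ∫ u in (0:ℝ)..x, f u

open NormedSpace

lemma survival_hasDerivAt (f : ℝ → ℝ) (hf : Continuous f) (x : ℝ) :
    HasDerivAt (survival f) (-f x) x :=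
  (hf.integral_hasStrictDerivAt 0 x).hasDerivAt.const_sub 1

@[simp]
lemma survival_zero (f : ℝ → ℝ) : survival f 0 = 1 := by simp [survival]

theorem HasDerivAt.vecMul {m n : Type*} [Fintype m] [Fintype n] {u : ℝ → m → ℝ}
    {A : ℝ → Matrix m n ℝ} {u' : m → ℝ} {A' : Matrix m n ℝ} {x : ℝ} (hu : HasDerivAt u u' x)
    (hA : ∀ k j, HasDerivAt (fun s => A s k j) (A' k j) x) :
    HasDerivAt (fun s => u s ᵥ* A s) (u' ᵥ* A x + u x ᵥ* A') x := by
  refine hasDerivAt_pi.2 fun j => ?_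
  simp only [Matrix.vecMul, dotProduct, Pi.add_apply, ← Finset.sum_add_distrib]
  exact HasDerivAt.fun_sum fun k _ => (hasDerivAt_pi.1 hu k).mul (hA k j)

section MatrixExp

variable {m : Type*} [Fintype m] [DecidableEq m]

-- `exp` is defined topologically, so any normed algebra structure on matrices can be used.
attribute [local instance] Matrix.linftyOpNormedRing Matrix.linftyOpNormedAlgebra

theorem Matrix.hasDerivAt_exp_const_sub_smul_apply (Q : Matrix m m ℝ) (b x : ℝ) (k j : m) :
    HasDerivAt (fun s : ℝ => exp ((b - s) • Q) k j) (-(Q * exp ((b - x) • Q)) k j) x :=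
  (Matrix.entryLinearMap ℝ ℝ k j).toContinuousLinearMap.hasFDerivAt.comp_hasDerivAt x
    ((hasDerivAt_exp_smul_const' Q (b - x)).comp_const_sub b x)

theorem Matrix.continuous_exp_smul (Q : Matrix m m ℝ) : Continuous fun s : ℝ => exp (s • Q) :=
  (differentiable_exp_smul_const ℝ Q).continuous

end MatrixExp

theorem eq_of_continuousOn_Icc_of_hasDerivAt_zero {ι : Type*} [Fintype ι] {g : ℝ → ι → ℝ}
    {a b : ℝ} (hab : a ≤ b) (hg : ContinuousOn g (Icc a b))
    (hg' : ∀ x ∈ Ioo a b, HasDerivAt g 0 x) : g b = g a := by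
  rcases hab.eq_or_lt with rfl | hlt
  · rfl
  funext j
  obtain ⟨_, _, hslope⟩ := exists_hasDerivAt_eq_slope (fun x => g x j) (fun _ => 0) hlt
    ((continuous_apply j).comp_continuousOn hg) fun x hx => hasDerivAt_pi.1 (hg' x hx) j
  rw [eq_comm, div_eq_zero_iff, sub_eq_zero] at hslope
  exact hslope.resolve_right (sub_ne_zero.2 hlt.ne')

theorem eq_smul_vecMul_exp_of_hasDerivAt {m : Type*} [Fintype m] [DecidableEq m]
    {Q : Matrix m m ℝ} {u : ℝ → m → ℝ} {c c' : ℝ → ℝ} {a b : ℝ} (hab : a ≤ b)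
    (hu : ContinuousOn u (Icc a b)) (hc : ContinuousOn c (Icc a b))
    (hc_ne : ∀ s ∈ Icc a b, c s ≠ 0) (hc' : ∀ s ∈ Ioo a b, HasDerivAt c (c' s) s)
    (hu' : ∀ s ∈ Ioo a b, HasDerivAt u ((c' s / c s) • u s + u s ᵥ* Q) s) :
    u b = (c b / c a) • (u a ᵥ* exp ((b - a) • Q)) := by
  set φ : ℝ → m → ℝ := fun s => (c s)⁻¹ • (u s ᵥ* exp ((b - s) • Q))
  have hE : Continuous fun s : ℝ => exp ((b - s) • Q) :=
    (Matrix.continuous_exp_smul Q).comp (continuous_const.sub continuous_id)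
  have hφ : ContinuousOn φ (Icc a b) := by
    refine (hc.inv₀ hc_ne).smul (continuousOn_iff_continuous_domRestrict.2 ?_)
    exact (continuousOn_iff_continuous_domRestrict.1 hu).matrix_vecMul
      (hE.comp continuous_subtype_val)
  have hφ' : ∀ s ∈ Ioo a b, HasDerivAt φ 0 s := by
    intro s hs
    have hcs := hc_ne s (Ioo_subset_Icc_self hs)
    refine (((hc' s hs).inv hcs).fun_smul ((hu' s hs).vecMul (A' := -(Q * exp ((b - s) • Q)))
      (Matrix.hasDerivAt_exp_const_sub_smul_apply Q b s))).congr_deriv ?_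
    rw [Matrix.add_vecMul, Matrix.vecMul_neg, ← Matrix.vecMul_vecMul, add_neg_cancel_right,
      Matrix.smul_vecMul, smul_smul, ← add_smul, Pi.inv_apply]
    refine smul_eq_zero_of_left ?_ _
    field_simp
    ring
  have hφ_eq := eq_of_continuousOn_Icc_of_hasDerivAt_zero hab hφ hφ'
  simp only [φ, sub_self, zero_smul, exp_zero, Matrix.vecMul_one] at hφ_eq
  rwa [inv_smul_eq_iff₀ (hc_ne b ⟨hab, le_rfl⟩), smul_smul, ← div_eq_mul_inv] at hφ_eq

theorem transport_eq_along_characteristic {L : ℕ} {Q : Matrix (Fin L) (Fin L) ℝ} {f : ℝ → ℝ}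
    (hf_cont : Continuous f) (hFc_pos : ∀ x ≥ (0:ℝ), 0 < survival f x)
    {i : ℝ → ℝ → Fin L → ℝ}
    (hi_cont : ContinuousOn (fun p : ℝ × ℝ => i p.1 p.2) (Ici 0 ×ˢ Ici 0))
    (hi_pde : ∀ t > (0:ℝ), ∀ 𝔞 > (0:ℝ),
      HasDerivAt (fun h : ℝ => i (t + h) (𝔞 + h))
        (-(f 𝔞 / survival f 𝔞) • i t 𝔞 + (i t 𝔞) ᵥ* Q) 0)
    {t₀ a₀ T : ℝ} (ht₀ : 0 ≤ t₀) (ha₀ : 0 ≤ a₀) (hT : 0 ≤ T) :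
    i (t₀ + T) (a₀ + T) = (survival f (a₀ + T) / survival f a₀) • (i t₀ a₀ ᵥ* exp (T • Q)) := by
  have hu : ContinuousOn (fun s => i (t₀ + s) (a₀ + s)) (Icc 0 T) :=
    hi_cont.comp (f := fun s => (t₀ + s, a₀ + s)) (by fun_prop) fun s hs =>
      ⟨add_nonneg ht₀ hs.1, add_nonneg ha₀ hs.1⟩
  have hc' (s : ℝ) : HasDerivAt (fun s => survival f (a₀ + s)) (-f (a₀ + s)) s :=
    (survival_hasDerivAt f hf_cont (a₀ + s)).comp_const_add a₀ s
  have hu' : ∀ s ∈ Ioo 0 T, HasDerivAt (fun s => i (t₀ + s) (a₀ + s))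
      ((-f (a₀ + s) / survival f (a₀ + s)) • i (t₀ + s) (a₀ + s) + i (t₀ + s) (a₀ + s) ᵥ* Q) s := by
    intro s hs
    have h := HasDerivAt.comp_sub_const s s (f := fun h => i (t₀ + s + h) (a₀ + s + h))
      (by
        rw [sub_self]
        exact hi_pde _ (add_pos_of_nonneg_of_pos ht₀ hs.1) _ (add_pos_of_nonneg_of_pos ha₀ hs.1))
    simpa [neg_div] using h
  simpa using eq_smul_vecMul_exp_of_hasDerivAt hT hu
    (fun s _ => (hc' s).continuousAt.continuousWithinAt)
    (fun s hs => (hFc_pos _ (add_nonneg ha₀ hs.1)).ne') (fun s _ => hc' s) hu'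

theorem transport_pde_representation_general
    (L : ℕ) (Q : Matrix (Fin L) (Fin L) ℝ)
    (f : ℝ → ℝ) (hf_cont : Continuous f)
    (hFc_pos : ∀ x ≥ (0:ℝ), 0 < survival f x)
    (i : ℝ → ℝ → Fin L → ℝ)
    (hi_cont : ContinuousOn (fun p : ℝ × ℝ => i p.1 p.2) (Ici 0 ×ˢ Ici 0))
    (hi_pde : ∀ t > (0:ℝ), ∀ 𝔞 > (0:ℝ),
      HasDerivAt (fun h : ℝ => i (t + h) (𝔞 + h))
        (-(f 𝔞 / survival f 𝔞) • i t 𝔞 + (i t 𝔞) ᵥ* Q) 0) :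
    (∀ t 𝔞 : ℝ, 0 ≤ t → t ≤ 𝔞 →
      i t 𝔞 = (survival f 𝔞 / survival f (𝔞 - t)) •
        ((i 0 (𝔞 - t)) ᵥ* NormedSpace.exp (t • Q))) ∧
    (∀ t 𝔞 : ℝ, 0 ≤ 𝔞 → 𝔞 < t →
      i t 𝔞 = survival f 𝔞 • ((i (t - 𝔞) 0) ᵥ* NormedSpace.exp (𝔞 • Q))) := by
  constructor
  · intro t 𝔞 ht ht𝔞
    simpa using transport_eq_along_characteristic hf_cont hFc_pos hi_cont hi_pde le_rfl
      (sub_nonneg.2 ht𝔞) ht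
  · intro t 𝔞 h𝔞 h𝔞t
    simpa using transport_eq_along_characteristic hf_cont hFc_pos hi_cont hi_pde
      (sub_nonneg.2 h𝔞t.le) le_rfl h𝔞

/-- **Theorem 3.1, uniqueness/representation part.** Any solution of the transport PDE
`∂_t i + ∂_𝔞 i = -μ(𝔞) i + i Q` is given by the formulas (3.4)–(3.5):
`i(t,𝔞) = (F^c(𝔞)/F^c(𝔞-t))·i(0,𝔞-t)·e^{tQ}` for `t ≤ 𝔞` and
`i(t,𝔞) = F^c(𝔞)·i(t-𝔞,0)·e^{𝔞Q}` for `𝔞 < t`. -/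
theorem transport_pde_representation
    (L : ℕ) (hL : 1 ≤ L) (Q : Matrix (Fin L) (Fin L) ℝ) (hQ : IsGeneratorMatrix Q)
    (f : ℝ → ℝ) (hf_cont : Continuous f) (hf_nonneg : ∀ x, 0 ≤ f x)
    (hf_prob : ∫ u in Ioi (0:ℝ), f u = 1)
    (hFc_pos : ∀ x ≥ (0:ℝ), 0 < survival f x)
    (i : ℝ → ℝ → Fin L → ℝ)
    (hi_cont : ContinuousOn (fun p : ℝ × ℝ => i p.1 p.2) (Ici 0 ×ˢ Ici 0))
    (hi_pde : ∀ t > (0:ℝ), ∀ 𝔞 > (0:ℝ),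
      HasDerivAt (fun h : ℝ => i (t + h) (𝔞 + h))
        (-(f 𝔞 / survival f 𝔞) • i t 𝔞 + (i t 𝔞) ᵥ* Q) 0) :
    (∀ t 𝔞 : ℝ, 0 ≤ t → t ≤ 𝔞 →
      i t 𝔞 = (survival f 𝔞 / survival f (𝔞 - t)) •
        ((i 0 (𝔞 - t)) ᵥ* NormedSpace.exp (t • Q))) ∧
    (∀ t 𝔞 : ℝ, 0 ≤ 𝔞 → 𝔞 < t →
      i t 𝔞 = survival f 𝔞 • ((i (t - 𝔞) 0) ᵥ* NormedSpace.exp (𝔞 • Q))) :=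
  transport_pde_representation_general L Q f hf_cont hFc_pos i hi_cont hi_pde
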